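/- Treatment-bridge proximal identification of the counterfactual event probability with right censoring (discrete version of Theorem 1, equation (4)): Let T₀ and C be random variables taking finitely many values in ℕ, set Δ := 1(T₀ ≤ C), and fix t ∈ ℕ. Assume: (i) negative control assumption: (T₀, W) ⫫ (Z, R) | (U, X); (ii) censoring at random in the external study: for every (z, x) with P(Z = z, X = x, R = 1) > 0, conditionally on {Z = z, X = x, R = 1} the variable C is independent of (T₀, U, W), and G(s | z, x) := P(C ≥ s | Z = z, X = x, R = 1) > 0 for every s ≤ t with P(T₀ = s | Z = z, X = x, R = 1) > 0; (iii) positivity: P(U = u, X = x, R = 1) > 0 whenever P(U = u, X = x) > 0, and P(W = w, X = x, R = 1) > 0 whenever P(W = w, X = x) > 0; (iv) completeness: for every x ∈ 𝒳 and every function g : 𝒰 → ℝ, if E[g(U) | W = w, X = x, R = 1] = 0 for every w with P(W = w, X = x, R = 1) > 0, then g(u) = 0 for every u with P(U = u, X = x, R = 1) > 0; (v) the treatment bridge function q : 𝒵 × 𝒳 → ℝ satisfies, for every (w, x) with P(W = w, X = x, R = 1) > 0, P(R = 0 | W = w, X = x)/P(R = 1 | W = w, X = x) = E[ q(Z, X)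 | W = w, X = x, R = 1 ]. If P(R = 0) > 0, then P(T₀ ≤ t | R = 0) = (1/P(R = 0))·E[ 1(R = 1)·q(Z, X)·Δ·1(T₀ ≤ t)/G(T₀ | Z, X) ]. -/

import Mathlib

open Finset

noncomputable section

open scoped Classical

variable {Ω : Type*} [Fintype Ω]

/-- Probability of an event `A` under the weight function `p`. -/
def pr (p : Ω → ℝ) (A : Ω → Prop) : ℝ := ∑ ω, if A ω then p ω else 0

/-- Expectation of a real random variable `Y` under the weight function `p`. -/
def ex (p : Ω → ℝ) (Y : Ω → ℝ) : ℝ := ∑ ω, p ω * Y ω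

/-- Conditional probability `P(A | B)`. -/
def cpr (p : Ω → ℝ) (A B : Ω → Prop) : ℝ := pr p (fun ω => A ω ∧ B ω) / pr p B

/-- Conditional expectation `E[Y | B]`. -/
def cex (p : Ω → ℝ) (Y : Ω → ℝ) (B : Ω → Prop) : ℝ :=
  (∑ ω, if B ω then p ω * Y ω else 0) / pr p B

set_option linter.unusedSectionVars false
set_option maxHeartbeats 1000000

section tools

variable {p : Ω → ℝ}

lemma pr_nonneg (hp : ∀ ω, 0 ≤ p ω) (A : Ω → Prop) : 0 ≤ pr p A := by
  unfold pr
  apply Finset.sum_nonneg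
  intro ω _
  by_cases h : A ω <;> simp [h, hp ω]

lemma pr_mono (hp : ∀ ω, 0 ≤ p ω) {A B : Ω → Prop} (h : ∀ ω, A ω → B ω) :
    pr p A ≤ pr p B := by
  unfold pr
  apply Finset.sum_le_sum
  intro ω _
  by_cases hA : A ω
  · simp [hA, h ω hA]
  · by_cases hB : B ω <;> simp [hA, hB, hp ω]

lemma pr_zero (hp : ∀ ω, 0 ≤ p ω) {A B : Ω → Prop} (h : ∀ ω, A ω → B ω)
    (hB : pr p B = 0) : pr p A = 0 :=
  le_antisymm (hB ▸ pr_mono hp h) (pr_nonneg hp A)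

lemma pr_congr {A B : Ω → Prop} (h : ∀ ω, A ω ↔ B ω) : pr p A = pr p B := by
  unfold pr
  exact Finset.sum_congr rfl fun ω _ => by rw [if_congr (h ω) rfl rfl]

lemma pr_empty {A : Ω → Prop} (h : ∀ ω, ¬ A ω) : pr p A = 0 := by
  unfold pr
  exact Finset.sum_eq_zero fun ω _ => by simp [h ω]

lemma ite_ite {P Q : Prop} {a b : ℝ} :
    (if P then (if Q then a else b) else b) = if P ∧ Q then a else b := by
  by_cases hP : P <;> by_cases hQ : Q <;> simp [hP, hQ]

lemma exI_fiber {V : Type*} [Fintype V] (h : Ω → V) (B : Ω → Prop) (g0 : Ω → ℝ)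
    {i : (ω : Ω) → Decidable (B ω)} :
    (∑ ω, @ite _ (B ω) (i ω) (g0 ω) 0)
      = ∑ v, ∑ ω, if h ω = v ∧ B ω then g0 ω else 0 := by
  rw [Finset.sum_comm]
  apply Finset.sum_congr rfl
  intro ω _
  by_cases hB : B ω
  · rw [if_pos hB]
    have e : ∀ v, (if h ω = v ∧ B ω then g0 ω else 0) = if h ω = v then g0 ω else 0 := by
      intro v
      by_cases hv : h ω = v
      · rw [if_pos ⟨hv, hB⟩, if_pos hv]
      · rw [if_neg (fun hc => hv hc.1), if_neg hv]
    rw [Finset.sum_congr rfl fun v _ => e v, Finset.sum_ite_eq]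
    simp
  · rw [if_neg hB]
    refine (Finset.sum_eq_zero fun v _ => ?_).symm
    rw [if_neg (fun hc => hB hc.2)]

lemma exI_fiber_nat (h : Ω → ℕ) (n : ℕ) (B : Ω → Prop) (g0 : Ω → ℝ)
    {i : (ω : Ω) → Decidable (B ω)} (hb : ∀ ω, B ω → h ω < n) :
    (∑ ω, @ite _ (B ω) (i ω) (g0 ω) 0)
      = ∑ s ∈ Finset.range n, ∑ ω, if h ω = s ∧ B ω then g0 ω else 0 := by
  rw [Finset.sum_comm]
  apply Finset.sum_congr rfl
  intro ω _
  by_cases hB : B ω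
  · rw [if_pos hB]
    have e : ∀ v, (if h ω = v ∧ B ω then g0 ω else 0) = if h ω = v then g0 ω else 0 := by
      intro v
      by_cases hv : h ω = v
      · rw [if_pos ⟨hv, hB⟩, if_pos hv]
      · rw [if_neg (fun hc => hv hc.1), if_neg hv]
    rw [Finset.sum_congr rfl fun v _ => e v, Finset.sum_ite_eq]
    simp [Finset.mem_range.mpr (hb ω hB)]
  · rw [if_neg hB]
    refine (Finset.sum_eq_zero fun v _ => ?_).symm
    rw [if_neg (fun hc => hB hc.2)]

lemma ite_inst {P : Prop} {i1 i2 : Decidable P} {a b : ℝ} :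
    @ite _ P i1 a b = @ite _ P i2 a b := by
  rw [Subsingleton.elim i1 i2]

lemma pr_fiber {V : Type*} [Fintype V] (h : Ω → V) (A : Ω → Prop) :
    pr p A = ∑ v, pr p (fun ω => h ω = v ∧ A ω) := by
  unfold pr
  rw [exI_fiber h A p]
  exact Finset.sum_congr rfl fun v _ => Finset.sum_congr rfl fun ω _ => ite_inst

lemma pr_fiber_nat (h : Ω → ℕ) (n : ℕ) (A : Ω → Prop) (hb : ∀ ω, A ω → h ω < n) :
    pr p A = ∑ s ∈ Finset.range n, pr p (fun ω => h ω = s ∧ A ω) := by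
  unfold pr
  rw [exI_fiber_nat h n A p hb]
  exact Finset.sum_congr rfl fun v _ => Finset.sum_congr rfl fun ω _ => ite_inst

lemma sum_ite_factor {A : Ω → Prop} {g0 : Ω → ℝ} {c : ℝ} {i : (ω : Ω) → Decidable (A ω)}
    (hc : ∀ ω, A ω → g0 ω = c) :
    (∑ ω, @ite _ (A ω) (i ω) (p ω * g0 ω) 0) = c * pr p A := by
  unfold pr
  rw [Finset.mul_sum]
  apply Finset.sum_congr rfl
  intro ω _
  by_cases hA : A ω
  · rw [if_pos hA, if_pos hA, hc ω hA]
    ring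
  · rw [if_neg hA, if_neg hA, mul_zero]

lemma exY_fiber {V : Type*} [Fintype V] (h : Ω → V) (f : V → ℝ) (B : Ω → Prop) (Y : Ω → ℝ)
    {i : (ω : Ω) → Decidable (B ω)} (hc : ∀ ω, B ω → Y ω = f (h ω)) :
    (∑ ω, @ite _ (B ω) (i ω) (p ω * Y ω) 0)
      = ∑ v, f v * pr p (fun ω => h ω = v ∧ B ω) := by
  have e0 : (∑ ω, @ite _ (B ω) (i ω) (p ω * Y ω) 0)
      = ∑ ω, @ite _ (B ω) (i ω) (p ω * f (h ω)) 0 :=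
    Finset.sum_congr rfl fun ω _ => by
      by_cases hB : B ω
      · rw [if_pos hB, if_pos hB, hc ω hB]
      · rw [if_neg hB, if_neg hB]
  rw [e0, exI_fiber (i := i) h B (fun ω => p ω * f (h ω))]
  exact Finset.sum_congr rfl fun v _ => sum_ite_factor (fun ω hω => by rw [hω.1])

lemma cex_fiber {V : Type*} [Fintype V] (h : Ω → V) (f : V → ℝ) (B : Ω → Prop) (Y : Ω → ℝ)
    (hc : ∀ ω, B ω → Y ω = f (h ω)) :
    cex p Y B = (∑ v, f v * pr p (fun ω => h ω = v ∧ B ω)) / pr p B := by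
  rw [cex, exY_fiber h f B Y hc]

/-- masked expectation -/
def exM (p : Ω → ℝ) (B : Ω → Prop) (Y : Ω → ℝ) : ℝ := ∑ ω, if B ω then p ω * Y ω else 0

lemma exM_fiber {V : Type*} [Fintype V] (h : Ω → V) (B : Ω → Prop) (Y : Ω → ℝ) :
    exM p B Y = ∑ v, exM p (fun ω => h ω = v ∧ B ω) Y := by
  unfold exM
  rw [exI_fiber h B (fun ω => p ω * Y ω)]
  exact Finset.sum_congr rfl fun v _ => Finset.sum_congr rfl fun ω _ => ite_inst

lemma exM_fiber_nat (h : Ω → ℕ) (n : ℕ) (B : Ω → Prop) (Y : Ω → ℝ)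
    (hb : ∀ ω, B ω → h ω < n) :
    exM p B Y = ∑ s ∈ Finset.range n, exM p (fun ω => h ω = s ∧ B ω) Y := by
  unfold exM
  rw [exI_fiber_nat h n B (fun ω => p ω * Y ω) hb]
  exact Finset.sum_congr rfl fun v _ => Finset.sum_congr rfl fun ω _ => ite_inst

lemma exM_const {B : Ω → Prop} {Y : Ω → ℝ} {c : ℝ} (hc : ∀ ω, B ω → Y ω = c) :
    exM p B Y = c * pr p B := by
  unfold exM
  exact sum_ite_factor hc

lemma cpr_mul_pr {A B : Ω → Prop} (hB : pr p B ≠ 0) :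
    cpr p A B * pr p B = pr p (fun ω => A ω ∧ B ω) := by
  rw [cpr, div_mul_cancel₀ _ hB]

end tools

section main

variable {𝒳 𝒰 𝒵 𝒲 : Type*} [Fintype 𝒳] [Fintype 𝒰] [Fintype 𝒵] [Fintype 𝒲]
variable {p : Ω → ℝ}

/-- Flattened joint-probability form of the negative control assumption. -/
lemma NCJ (hp : ∀ ω, 0 ≤ p ω)
    (R : Ω → Bool) (X : Ω → 𝒳) (U : Ω → 𝒰) (Z : Ω → 𝒵) (W : Ω → 𝒲) (T0 : Ω → ℕ)
    (hNC : ∀ (s : ℕ) (w : 𝒲) (z : 𝒵) (r : Bool) (u : 𝒰) (x : 𝒳),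
      0 < pr p (fun ω => U ω = u ∧ X ω = x) →
      cpr p (fun ω => (T0 ω = s ∧ W ω = w) ∧ (Z ω = z ∧ R ω = r))
          (fun ω => U ω = u ∧ X ω = x)
        = cpr p (fun ω => T0 ω = s ∧ W ω = w) (fun ω => U ω = u ∧ X ω = x)
          * cpr p (fun ω => Z ω = z ∧ R ω = r) (fun ω => U ω = u ∧ X ω = x))
    (s : ℕ) (w : 𝒲) (z : 𝒵) (r : Bool) (u : 𝒰) (x : 𝒳) :
    pr p (fun ω => T0 ω = s ∧ W ω = w ∧ Z ω = z ∧ R ω = r ∧ U ω = u ∧ X ω = x)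
      * pr p (fun ω => U ω = u ∧ X ω = x)
    = pr p (fun ω => T0 ω = s ∧ W ω = w ∧ U ω = u ∧ X ω = x)
      * pr p (fun ω => Z ω = z ∧ R ω = r ∧ U ω = u ∧ X ω = x) := by
  by_cases hux : 0 < pr p (fun ω => U ω = u ∧ X ω = x)
  · have h := hNC s w z r u x hux
    simp only [cpr] at h
    have hne : pr p (fun ω => U ω = u ∧ X ω = x) ≠ 0 := ne_of_gt hux
    field_simp at h
    -- h : pr(((T0=s∧W=w)∧(Z=z∧R=r))∧(U∧X)) * pr(U∧X)
    --   = pr((T0=s∧W=w)∧(U∧X)) * pr((Z=z∧R=r)∧(U∧X))   (up to arrangement)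
    have e1 : pr p (fun ω => ((T0 ω = s ∧ W ω = w) ∧ (Z ω = z ∧ R ω = r)) ∧ (U ω = u ∧ X ω = x))
        = pr p (fun ω => T0 ω = s ∧ W ω = w ∧ Z ω = z ∧ R ω = r ∧ U ω = u ∧ X ω = x) :=
      pr_congr fun ω => by tauto
    have e2 : pr p (fun ω => (T0 ω = s ∧ W ω = w) ∧ (U ω = u ∧ X ω = x))
        = pr p (fun ω => T0 ω = s ∧ W ω = w ∧ U ω = u ∧ X ω = x) :=
      pr_congr fun ω => by tauto
    have e3 : pr p (fun ω => (Z ω = z ∧ R ω = r) ∧ (U ω = u ∧ X ω = x))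
        = pr p (fun ω => Z ω = z ∧ R ω = r ∧ U ω = u ∧ X ω = x) :=
      pr_congr fun ω => by tauto
    rw [e1, e2, e3] at h
    exact mul_right_cancel₀ hne (by linear_combination (pr p (fun ω => U ω = u ∧ X ω = x)) * h)
  · have h0 : pr p (fun ω => U ω = u ∧ X ω = x) = 0 :=
      le_antisymm (not_lt.1 hux) (pr_nonneg hp _)
    have e1 : pr p (fun ω => Z ω = z ∧ R ω = r ∧ U ω = u ∧ X ω = x) = 0 :=
      pr_zero hp (fun ω hω => ⟨hω.2.2.1, hω.2.2.2⟩) h0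
    rw [h0, e1, mul_zero, mul_zero]

lemma div_form (hp : ∀ ω, 0 ≤ p ω) {A B : Ω → Prop} (himp : ∀ ω, A ω → B ω) {c : ℝ}
    (hprod : pr p A * pr p B = c) : pr p A = c / pr p B := by
  by_cases hB : pr p B = 0
  · rw [hB, div_zero]
    exact pr_zero hp himp hB
  · rw [eq_div_iff hB]
    exact hprod

variable (hp : ∀ ω, 0 ≤ p ω)
variable (R : Ω → Bool) (X : Ω → 𝒳) (U : Ω → 𝒰) (Z : Ω → 𝒵) (W : Ω → 𝒲) (T0 : Ω → ℕ)
variable (hNC : ∀ (s : ℕ) (w : 𝒲) (z : 𝒵) (r : Bool) (u : 𝒰) (x : 𝒳),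
      0 < pr p (fun ω => U ω = u ∧ X ω = x) →
      cpr p (fun ω => (T0 ω = s ∧ W ω = w) ∧ (Z ω = z ∧ R ω = r))
          (fun ω => U ω = u ∧ X ω = x)
        = cpr p (fun ω => T0 ω = s ∧ W ω = w) (fun ω => U ω = u ∧ X ω = x)
          * cpr p (fun ω => Z ω = z ∧ R ω = r) (fun ω => U ω = u ∧ X ω = x))

include hp hNC

lemma NC2 (s : ℕ) (z : 𝒵) (r : Bool) (u : 𝒰) (x : 𝒳) :
    pr p (fun ω => T0 ω = s ∧ Z ω = z ∧ R ω = r ∧ U ω = u ∧ X ω = x)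
      * pr p (fun ω => U ω = u ∧ X ω = x)
    = pr p (fun ω => T0 ω = s ∧ U ω = u ∧ X ω = x)
      * pr p (fun ω => Z ω = z ∧ R ω = r ∧ U ω = u ∧ X ω = x) := by
  have h1 : pr p (fun ω => T0 ω = s ∧ Z ω = z ∧ R ω = r ∧ U ω = u ∧ X ω = x)
      = ∑ w, pr p (fun ω => T0 ω = s ∧ W ω = w ∧ Z ω = z ∧ R ω = r ∧ U ω = u ∧ X ω = x) := by
    exact (pr_fiber W _).trans
      (Finset.sum_congr rfl fun w _ => pr_congr fun ω => by tauto)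
  have h2 : pr p (fun ω => T0 ω = s ∧ U ω = u ∧ X ω = x)
      = ∑ w, pr p (fun ω => T0 ω = s ∧ W ω = w ∧ U ω = u ∧ X ω = x) := by
    exact (pr_fiber W _).trans
      (Finset.sum_congr rfl fun w _ => pr_congr fun ω => by tauto)
  rw [h1, h2, Finset.sum_mul, Finset.sum_mul]
  exact Finset.sum_congr rfl fun w _ => NCJ hp R X U Z W T0 hNC s w z r u x

lemma NC1 (w : 𝒲) (z : 𝒵) (r : Bool) (u : 𝒰) (x : 𝒳) :
    pr p (fun ω => W ω = w ∧ Z ω = z ∧ R ω = r ∧ U ω = u ∧ X ω = x)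
      * pr p (fun ω => U ω = u ∧ X ω = x)
    = pr p (fun ω => W ω = w ∧ U ω = u ∧ X ω = x)
      * pr p (fun ω => Z ω = z ∧ R ω = r ∧ U ω = u ∧ X ω = x) := by
  set M := Finset.univ.sup T0 + 1 with hM
  have hb : ∀ (A : Ω → Prop), ∀ ω, A ω → T0 ω < M :=
    fun A ω _ => Nat.lt_succ_of_le (Finset.le_sup (Finset.mem_univ ω))
  have h1 : pr p (fun ω => W ω = w ∧ Z ω = z ∧ R ω = r ∧ U ω = u ∧ X ω = x)
      = ∑ s ∈ Finset.range M,
          pr p (fun ω => T0 ω = s ∧ W ω = w ∧ Z ω = z ∧ R ω = r ∧ U ω = u ∧ X ω = x) := by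
    exact (pr_fiber_nat T0 M _ (hb _)).trans
      (Finset.sum_congr rfl fun s _ => pr_congr fun ω => by tauto)
  have h2 : pr p (fun ω => W ω = w ∧ U ω = u ∧ X ω = x)
      = ∑ s ∈ Finset.range M,
          pr p (fun ω => T0 ω = s ∧ W ω = w ∧ U ω = u ∧ X ω = x) := by
    exact (pr_fiber_nat T0 M _ (hb _)).trans
      (Finset.sum_congr rfl fun s _ => pr_congr fun ω => by tauto)
  rw [h1, h2, Finset.sum_mul, Finset.sum_mul]
  exact Finset.sum_congr rfl fun s _ => NCJ hp R X U Z W T0 hNC s w z r u x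

lemma M1 (w : 𝒲) (r : Bool) (u : 𝒰) (x : 𝒳) :
    pr p (fun ω => W ω = w ∧ R ω = r ∧ U ω = u ∧ X ω = x)
      * pr p (fun ω => U ω = u ∧ X ω = x)
    = pr p (fun ω => W ω = w ∧ U ω = u ∧ X ω = x)
      * pr p (fun ω => R ω = r ∧ U ω = u ∧ X ω = x) := by
  have h1 : pr p (fun ω => W ω = w ∧ R ω = r ∧ U ω = u ∧ X ω = x)
      = ∑ z, pr p (fun ω => W ω = w ∧ Z ω = z ∧ R ω = r ∧ U ω = u ∧ X ω = x) := by
    exact (pr_fiber Z _).trans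
      (Finset.sum_congr rfl fun z _ => pr_congr fun ω => by tauto)
  have h2 : pr p (fun ω => R ω = r ∧ U ω = u ∧ X ω = x)
      = ∑ z, pr p (fun ω => Z ω = z ∧ R ω = r ∧ U ω = u ∧ X ω = x) := by
    exact (pr_fiber Z _).trans
      (Finset.sum_congr rfl fun z _ => pr_congr fun ω => by tauto)
  rw [h1, h2, Finset.sum_mul, Finset.mul_sum]
  exact Finset.sum_congr rfl fun z _ => NC1 hp R X U Z W T0 hNC w z r u x

lemma T1 (s : ℕ) (r : Bool) (u : 𝒰) (x : 𝒳) :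
    pr p (fun ω => T0 ω = s ∧ R ω = r ∧ U ω = u ∧ X ω = x)
      * pr p (fun ω => U ω = u ∧ X ω = x)
    = pr p (fun ω => T0 ω = s ∧ U ω = u ∧ X ω = x)
      * pr p (fun ω => R ω = r ∧ U ω = u ∧ X ω = x) := by
  have h1 : pr p (fun ω => T0 ω = s ∧ R ω = r ∧ U ω = u ∧ X ω = x)
      = ∑ z, pr p (fun ω => T0 ω = s ∧ Z ω = z ∧ R ω = r ∧ U ω = u ∧ X ω = x) := by
    exact (pr_fiber Z _).trans
      (Finset.sum_congr rfl fun z _ => pr_congr fun ω => by tauto)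
  have h2 : pr p (fun ω => R ω = r ∧ U ω = u ∧ X ω = x)
      = ∑ z, pr p (fun ω => Z ω = z ∧ R ω = r ∧ U ω = u ∧ X ω = x) := by
    exact (pr_fiber Z _).trans
      (Finset.sum_congr rfl fun z _ => pr_congr fun ω => by tauto)
  rw [h1, h2, Finset.sum_mul, Finset.mul_sum]
  exact Finset.sum_congr rfl fun z _ => NC2 hp R X U Z W T0 hNC s z r u x

/-- auxiliary bridge-difference function -/
def gfun (p : Ω → ℝ) {𝒳 𝒰 𝒵 : Type*} [Fintype 𝒵]
    (R : Ω → Bool) (X : Ω → 𝒳) (U : Ω → 𝒰) (Z : Ω → 𝒵) (q : 𝒵 → 𝒳 → ℝ) (x : 𝒳) (v : 𝒰) : ℝ :=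
  ((∑ z, q z x * pr p (fun ω => Z ω = z ∧ R ω = true ∧ U ω = v ∧ X ω = x))
    - pr p (fun ω => R ω = false ∧ U ω = v ∧ X ω = x))
  / pr p (fun ω => U ω = v ∧ X ω = x ∧ R ω = true)

lemma Key (q : 𝒵 → 𝒳 → ℝ)
    (hPosU : ∀ (u : 𝒰) (x : 𝒳),
      0 < pr p (fun ω => U ω = u ∧ X ω = x) →
      0 < pr p (fun ω => U ω = u ∧ X ω = x ∧ R ω = true))
    (hComp : ∀ (x : 𝒳) (g : 𝒰 → ℝ),
      (∀ w : 𝒲, 0 < pr p (fun ω => W ω = w ∧ X ω = x ∧ R ω = true) →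
        cex p (fun ω => g (U ω)) (fun ω => W ω = w ∧ X ω = x ∧ R ω = true) = 0) →
      ∀ u : 𝒰, 0 < pr p (fun ω => U ω = u ∧ X ω = x ∧ R ω = true) → g u = 0)
    (hBridge : ∀ (w : 𝒲) (x : 𝒳), 0 < pr p (fun ω => W ω = w ∧ X ω = x ∧ R ω = true) →
      cpr p (fun ω => R ω = false) (fun ω => W ω = w ∧ X ω = x)
          / cpr p (fun ω => R ω = true) (fun ω => W ω = w ∧ X ω = x)
        = cex p (fun ω => q (Z ω) (X ω)) (fun ω => W ω = w ∧ X ω = x ∧ R ω = true))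
    (x : 𝒳) (u : 𝒰) :
    (∑ z, q z x * pr p (fun ω => Z ω = z ∧ R ω = true ∧ U ω = u ∧ X ω = x))
      = pr p (fun ω => R ω = false ∧ U ω = u ∧ X ω = x) := by
  have hzero : ∀ v : 𝒰, pr p (fun ω => U ω = v ∧ X ω = x ∧ R ω = true) = 0 →
      pr p (fun ω => U ω = v ∧ X ω = x) = 0 := by
    intro v hv
    by_contra hne
    have hpos : 0 < pr p (fun ω => U ω = v ∧ X ω = x) :=
      lt_of_le_of_ne (pr_nonneg hp _) (Ne.symm hne)
    exact absurd hv (ne_of_gt (hPosU v x hpos))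
  have hAzero : ∀ v : 𝒰, pr p (fun ω => U ω = v ∧ X ω = x) = 0 →
      (∑ z, q z x * pr p (fun ω => Z ω = z ∧ R ω = true ∧ U ω = v ∧ X ω = x)) = 0 := by
    intro v hv
    refine Finset.sum_eq_zero fun z _ => ?_
    rw [pr_zero hp (fun ω hω => ⟨hω.2.2.1, hω.2.2.2⟩) hv, mul_zero]
  have hBzero : ∀ v : 𝒰, pr p (fun ω => U ω = v ∧ X ω = x) = 0 →
      pr p (fun ω => R ω = false ∧ U ω = v ∧ X ω = x) = 0 :=
    fun v hv => pr_zero hp (fun ω hω => ⟨hω.2.1, hω.2.2⟩) hv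
  have hgU := hComp x (gfun p R X U Z q x) ?main
  case main =>
    intro w hw
    simp only [cex]
    rw [exY_fiber U (gfun p R X U Z q x) _ _ (fun ω _ => rfl)]
    have key1 : ∀ v : 𝒰,
        gfun p R X U Z q x v * pr p (fun ω => U ω = v ∧ (W ω = w ∧ X ω = x ∧ R ω = true))
        = ((∑ z, q z x * pr p (fun ω => Z ω = z ∧ R ω = true ∧ U ω = v ∧ X ω = x))
            - pr p (fun ω => R ω = false ∧ U ω = v ∧ X ω = x))
          * (pr p (fun ω => W ω = w ∧ U ω = v ∧ X ω = x)
              / pr p (fun ω => U ω = v ∧ X ω = x)) := by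
      intro v
      by_cases hDv : pr p (fun ω => U ω = v ∧ X ω = x ∧ R ω = true) = 0
      · have hUX0 := hzero v hDv
        rw [gfun, hDv, div_zero, zero_mul, hAzero v hUX0, hBzero v hUX0]
        simp
      · have hD' : 0 < pr p (fun ω => U ω = v ∧ X ω = x ∧ R ω = true) :=
          lt_of_le_of_ne (pr_nonneg hp _) (Ne.symm hDv)
        have hUXpos : 0 < pr p (fun ω => U ω = v ∧ X ω = x) :=
          lt_of_lt_of_le hD' (pr_mono hp (fun ω hω => ⟨hω.1, hω.2.1⟩))
        have e1 : pr p (fun ω => U ω = v ∧ (W ω = w ∧ X ω = x ∧ R ω = true))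
            = pr p (fun ω => W ω = w ∧ R ω = true ∧ U ω = v ∧ X ω = x) :=
          pr_congr fun ω => by tauto
        have e2 : pr p (fun ω => U ω = v ∧ X ω = x ∧ R ω = true)
            = pr p (fun ω => R ω = true ∧ U ω = v ∧ X ω = x) :=
          pr_congr fun ω => by tauto
        have hM := div_form hp (fun ω (hω : W ω = w ∧ R ω = true ∧ U ω = v ∧ X ω = x) =>
            ⟨hω.2.2.1, hω.2.2.2⟩) (M1 hp R X U Z W T0 hNC w true v x)
        rw [gfun, e1, hM, e2]
        have hRt : pr p (fun ω => R ω = true ∧ U ω = v ∧ X ω = x) ≠ 0 := by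
          rw [← e2]; exact hDv
        have hUXne : pr p (fun ω => U ω = v ∧ X ω = x) ≠ 0 := ne_of_gt hUXpos
        field_simp
    rw [Finset.sum_congr rfl (fun v _ => key1 v)]
    -- Num = Σ (A v - B v) * (w1 v / dux v); show it is 0 via the bridge equation
    have hSβ : pr p (fun ω => R ω = false ∧ (W ω = w ∧ X ω = x))
        = ∑ v, pr p (fun ω => R ω = false ∧ U ω = v ∧ X ω = x)
            * (pr p (fun ω => W ω = w ∧ U ω = v ∧ X ω = x)
                / pr p (fun ω => U ω = v ∧ X ω = x)) := by
      refine (pr_fiber U _).trans (Finset.sum_congr rfl fun v _ => ?_)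
      have e1 : pr p (fun ω => U ω = v ∧ (R ω = false ∧ (W ω = w ∧ X ω = x)))
          = pr p (fun ω => W ω = w ∧ R ω = false ∧ U ω = v ∧ X ω = x) :=
        pr_congr fun ω => by tauto
      rw [e1, div_form hp (fun ω (hω : W ω = w ∧ R ω = false ∧ U ω = v ∧ X ω = x) =>
        ⟨hω.2.2.1, hω.2.2.2⟩) (M1 hp R X U Z W T0 hNC w false v x)]
      ring
    have hSα : (∑ z, q z x * pr p (fun ω => Z ω = z ∧ (W ω = w ∧ X ω = x ∧ R ω = true)))
        = ∑ v, (∑ z, q z x * pr p (fun ω => Z ω = z ∧ R ω = true ∧ U ω = v ∧ X ω = x))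
            * (pr p (fun ω => W ω = w ∧ U ω = v ∧ X ω = x)
                / pr p (fun ω => U ω = v ∧ X ω = x)) := by
      have e : ∀ z : 𝒵, pr p (fun ω => Z ω = z ∧ (W ω = w ∧ X ω = x ∧ R ω = true))
          = ∑ v, pr p (fun ω => W ω = w ∧ U ω = v ∧ X ω = x)
              * pr p (fun ω => Z ω = z ∧ R ω = true ∧ U ω = v ∧ X ω = x)
              / pr p (fun ω => U ω = v ∧ X ω = x) := by
        intro z
        refine (pr_fiber U _).trans (Finset.sum_congr rfl fun v _ => ?_)
        have e1 : pr p (fun ω => U ω = v ∧ (Z ω = z ∧ (W ω = w ∧ X ω = x ∧ R ω = true)))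
            = pr p (fun ω => W ω = w ∧ Z ω = z ∧ R ω = true ∧ U ω = v ∧ X ω = x) :=
          pr_congr fun ω => by tauto
        rw [e1, div_form hp (fun ω (hω : W ω = w ∧ Z ω = z ∧ R ω = true ∧ U ω = v ∧ X ω = x) =>
          ⟨hω.2.2.2.1, hω.2.2.2.2⟩) (NC1 hp R X U Z W T0 hNC w z true v x)]
      rw [Finset.sum_congr rfl (fun z _ => by rw [e z])]
      rw [Finset.sum_congr rfl (fun z _ => Finset.mul_sum _ _ _), Finset.sum_comm]
      refine Finset.sum_congr rfl fun v _ => ?_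
      rw [Finset.sum_mul]
      refine Finset.sum_congr rfl fun z _ => ?_
      ring
    -- bridge equation gives Σβ = Σα
    have hN1 : pr p (fun ω => R ω = true ∧ (W ω = w ∧ X ω = x))
        = pr p (fun ω => W ω = w ∧ X ω = x ∧ R ω = true) := pr_congr fun ω => by tauto
    have hN1pos : 0 < pr p (fun ω => R ω = true ∧ (W ω = w ∧ X ω = x)) := hN1 ▸ hw
    have hpwx : 0 < pr p (fun ω => W ω = w ∧ X ω = x) :=
      lt_of_lt_of_le hN1pos (pr_mono hp (fun ω hω => hω.2))
    have hb := hBridge w x hw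
    rw [cex_fiber Z (fun z => q z x) _ _ (fun ω hω => by rw [hω.2.1])] at hb
    simp only [cpr] at hb
    rw [hN1] at hb
    have hprBw_ne : pr p (fun ω => W ω = w ∧ X ω = x ∧ R ω = true) ≠ 0 := ne_of_gt hw
    have hpwx_ne : pr p (fun ω => W ω = w ∧ X ω = x) ≠ 0 := ne_of_gt hpwx
    field_simp at hb
    refine div_eq_zero_iff.mpr (Or.inl ?_)
    rw [Finset.sum_congr rfl (fun v _ => sub_mul _ _ _), Finset.sum_sub_distrib,
      ← hSα, ← hSβ, hb]
    exact sub_self _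
  by_cases hDu : pr p (fun ω => U ω = u ∧ X ω = x ∧ R ω = true) = 0
  · rw [hAzero u (hzero u hDu), hBzero u (hzero u hDu)]
  · have hpos : 0 < pr p (fun ω => U ω = u ∧ X ω = x ∧ R ω = true) :=
      lt_of_le_of_ne (pr_nonneg hp _) (Ne.symm hDu)
    have h0 := hgU u hpos
    rw [gfun] at h0
    have := (div_eq_zero_iff.mp h0).resolve_right hDu
    linarith

lemma CC (q : 𝒵 → 𝒳 → ℝ)
    (hPosU : ∀ (u : 𝒰) (x : 𝒳),
      0 < pr p (fun ω => U ω = u ∧ X ω = x) →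
      0 < pr p (fun ω => U ω = u ∧ X ω = x ∧ R ω = true))
    (hComp : ∀ (x : 𝒳) (g : 𝒰 → ℝ),
      (∀ w : 𝒲, 0 < pr p (fun ω => W ω = w ∧ X ω = x ∧ R ω = true) →
        cex p (fun ω => g (U ω)) (fun ω => W ω = w ∧ X ω = x ∧ R ω = true) = 0) →
      ∀ u : 𝒰, 0 < pr p (fun ω => U ω = u ∧ X ω = x ∧ R ω = true) → g u = 0)
    (hBridge : ∀ (w : 𝒲) (x : 𝒳), 0 < pr p (fun ω => W ω = w ∧ X ω = x ∧ R ω = true) →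
      cpr p (fun ω => R ω = false) (fun ω => W ω = w ∧ X ω = x)
          / cpr p (fun ω => R ω = true) (fun ω => W ω = w ∧ X ω = x)
        = cex p (fun ω => q (Z ω) (X ω)) (fun ω => W ω = w ∧ X ω = x ∧ R ω = true))
    (s : ℕ) (x : 𝒳) :
    (∑ z, q z x * pr p (fun ω => T0 ω = s ∧ Z ω = z ∧ X ω = x ∧ R ω = true))
      = pr p (fun ω => T0 ω = s ∧ X ω = x ∧ R ω = false) := by
  have h1 : ∀ z : 𝒵, pr p (fun ω => T0 ω = s ∧ Z ω = z ∧ X ω = x ∧ R ω = true)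
      = ∑ u, pr p (fun ω => T0 ω = s ∧ Z ω = z ∧ R ω = true ∧ U ω = u ∧ X ω = x) :=
    fun z => (pr_fiber U _).trans (Finset.sum_congr rfl fun u _ => pr_congr fun ω => by tauto)
  have h2 : pr p (fun ω => T0 ω = s ∧ X ω = x ∧ R ω = false)
      = ∑ u, pr p (fun ω => T0 ω = s ∧ R ω = false ∧ U ω = u ∧ X ω = x) :=
    (pr_fiber U _).trans (Finset.sum_congr rfl fun u _ => pr_congr fun ω => by tauto)
  rw [h2, Finset.sum_congr rfl fun z (_ : z ∈ Finset.univ) => by rw [h1 z],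
    Finset.sum_congr rfl fun z (_ : z ∈ Finset.univ) => Finset.mul_sum _ _ _,
    Finset.sum_comm]
  refine Finset.sum_congr rfl fun u _ => ?_
  have hNC2' : ∀ z : 𝒵, pr p (fun ω => T0 ω = s ∧ Z ω = z ∧ R ω = true ∧ U ω = u ∧ X ω = x)
      = pr p (fun ω => T0 ω = s ∧ U ω = u ∧ X ω = x)
        * pr p (fun ω => Z ω = z ∧ R ω = true ∧ U ω = u ∧ X ω = x)
        / pr p (fun ω => U ω = u ∧ X ω = x) :=
    fun z => div_form hp (fun ω hω => ⟨hω.2.2.2.1, hω.2.2.2.2⟩)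
      (NC2 hp R X U Z W T0 hNC s z true u x)
  have hT1' : pr p (fun ω => T0 ω = s ∧ R ω = false ∧ U ω = u ∧ X ω = x)
      = pr p (fun ω => T0 ω = s ∧ U ω = u ∧ X ω = x)
        * pr p (fun ω => R ω = false ∧ U ω = u ∧ X ω = x)
        / pr p (fun ω => U ω = u ∧ X ω = x) :=
    div_form hp (fun ω hω => ⟨hω.2.2.1, hω.2.2.2⟩)
      (T1 hp R X U Z W T0 hNC s false u x)
  rw [Finset.sum_congr rfl fun z (_ : z ∈ Finset.univ) => by rw [hNC2' z], hT1',
    ← Key hp R X U Z W T0 hNC q hPosU hComp hBridge x u, Finset.mul_sum, Finset.sum_div]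
  exact Finset.sum_congr rfl fun z _ => by ring

lemma Censor (C : Ω → ℕ) (G : 𝒵 → 𝒳 → ℕ → ℝ) (t : ℕ)
    (hG : ∀ (z : 𝒵) (x : 𝒳) (s : ℕ),
      G z x s = cpr p (fun ω => s ≤ C ω) (fun ω => Z ω = z ∧ X ω = x ∧ R ω = true))
    (hCAR : ∀ (z : 𝒵) (x : 𝒳), 0 < pr p (fun ω => Z ω = z ∧ X ω = x ∧ R ω = true) →
      ∀ (c s : ℕ) (u : 𝒰) (w : 𝒲),
        cpr p (fun ω => C ω = c ∧ (T0 ω = s ∧ U ω = u ∧ W ω = w))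
            (fun ω => Z ω = z ∧ X ω = x ∧ R ω = true)
          = cpr p (fun ω => C ω = c) (fun ω => Z ω = z ∧ X ω = x ∧ R ω = true)
            * cpr p (fun ω => T0 ω = s ∧ U ω = u ∧ W ω = w)
                (fun ω => Z ω = z ∧ X ω = x ∧ R ω = true))
    (hGpos : ∀ (z : 𝒵) (x : 𝒳), 0 < pr p (fun ω => Z ω = z ∧ X ω = x ∧ R ω = true) →
      ∀ s ≤ t, 0 < cpr p (fun ω => T0 ω = s) (fun ω => Z ω = z ∧ X ω = x ∧ R ω = true) →
        0 < G z x s)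
    (a : ℝ) (z : 𝒵) (x : 𝒳) (s : ℕ) (hs : s ≤ t) :
    a / G z x s * pr p (fun ω => T0 ω = s ∧ s ≤ C ω ∧ Z ω = z ∧ X ω = x ∧ R ω = true)
      = a * pr p (fun ω => T0 ω = s ∧ Z ω = z ∧ X ω = x ∧ R ω = true) := by
  by_cases hB : pr p (fun ω => Z ω = z ∧ X ω = x ∧ R ω = true) = 0
  · rw [pr_zero hp (fun ω hω => ⟨hω.2.2.1, hω.2.2.2.1, hω.2.2.2.2⟩) hB,
      pr_zero hp (fun ω hω => hω.2) hB, mul_zero, mul_zero]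
  · have hBpos : 0 < pr p (fun ω => Z ω = z ∧ X ω = x ∧ R ω = true) :=
      lt_of_le_of_ne (pr_nonneg hp _) (Ne.symm hB)
    have hCc : ∀ c : ℕ, pr p (fun ω => C ω = c ∧ T0 ω = s ∧ Z ω = z ∧ X ω = x ∧ R ω = true)
        = cpr p (fun ω => C ω = c) (fun ω => Z ω = z ∧ X ω = x ∧ R ω = true)
          * pr p (fun ω => T0 ω = s ∧ Z ω = z ∧ X ω = x ∧ R ω = true) := by
      intro c
      have d1 : pr p (fun ω => C ω = c ∧ T0 ω = s ∧ Z ω = z ∧ X ω = x ∧ R ω = true)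
          = ∑ u, ∑ w', pr p (fun ω => (C ω = c ∧ (T0 ω = s ∧ U ω = u ∧ W ω = w'))
              ∧ (Z ω = z ∧ X ω = x ∧ R ω = true)) := by
        refine (pr_fiber U _).trans (Finset.sum_congr rfl fun u _ => ?_)
        exact (pr_fiber W _).trans
          (Finset.sum_congr rfl fun w' _ => pr_congr fun ω => by tauto)
      have d2 : pr p (fun ω => T0 ω = s ∧ Z ω = z ∧ X ω = x ∧ R ω = true)
          = ∑ u, ∑ w', pr p (fun ω => (T0 ω = s ∧ U ω = u ∧ W ω = w')
              ∧ (Z ω = z ∧ X ω = x ∧ R ω = true)) := by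
        refine (pr_fiber U _).trans (Finset.sum_congr rfl fun u _ => ?_)
        exact (pr_fiber W _).trans
          (Finset.sum_congr rfl fun w' _ => pr_congr fun ω => by tauto)
      rw [d1, d2, Finset.mul_sum]
      refine Finset.sum_congr rfl fun u _ => ?_
      rw [Finset.mul_sum]
      refine Finset.sum_congr rfl fun w' _ => ?_
      rw [← cpr_mul_pr hB, hCAR z x hBpos c s u w', mul_assoc, cpr_mul_pr hB]
    have hb1 : ∀ ω : Ω, C ω < Finset.univ.sup C + 1 :=
      fun ω => Nat.lt_succ_of_le (Finset.le_sup (Finset.mem_univ ω))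
    have e1 : pr p (fun ω => T0 ω = s ∧ s ≤ C ω ∧ Z ω = z ∧ X ω = x ∧ R ω = true)
        = ∑ c ∈ Finset.range (Finset.univ.sup C + 1),
            (if s ≤ c then
              pr p (fun ω => C ω = c ∧ T0 ω = s ∧ Z ω = z ∧ X ω = x ∧ R ω = true) else 0) := by
      refine (pr_fiber_nat C _ _ (fun ω _ => hb1 ω)).trans
        (Finset.sum_congr rfl fun c _ => ?_)
      by_cases hsc : s ≤ c
      · rw [if_pos hsc]
        refine pr_congr fun ω => ⟨fun h => ⟨h.1, h.2.1, h.2.2.2⟩, fun h => ?_⟩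
        exact ⟨h.1, h.2.1, h.1 ▸ hsc, h.2.2⟩
      · rw [if_neg hsc]
        exact pr_empty fun ω hω => hsc (hω.1 ▸ hω.2.2.1)
    have e2 : pr p (fun ω => s ≤ C ω ∧ (Z ω = z ∧ X ω = x ∧ R ω = true))
        = ∑ c ∈ Finset.range (Finset.univ.sup C + 1),
            (if s ≤ c then
              pr p (fun ω => C ω = c ∧ (Z ω = z ∧ X ω = x ∧ R ω = true)) else 0) := by
      refine (pr_fiber_nat C _ _ (fun ω _ => hb1 ω)).trans
        (Finset.sum_congr rfl fun c _ => ?_)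
      by_cases hsc : s ≤ c
      · rw [if_pos hsc]
        refine pr_congr fun ω => ⟨fun h => ⟨h.1, h.2.2⟩, fun h => ?_⟩
        exact ⟨h.1, h.1 ▸ hsc, h.2⟩
      · rw [if_neg hsc]
        exact pr_empty fun ω hω => hsc (hω.1 ▸ hω.2.1)
    have hcens : pr p (fun ω => T0 ω = s ∧ s ≤ C ω ∧ Z ω = z ∧ X ω = x ∧ R ω = true)
        = G z x s * pr p (fun ω => T0 ω = s ∧ Z ω = z ∧ X ω = x ∧ R ω = true) := by
      have step : ∀ c ∈ Finset.range (Finset.univ.sup C + 1),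
          (if s ≤ c then
            pr p (fun ω => C ω = c ∧ T0 ω = s ∧ Z ω = z ∧ X ω = x ∧ R ω = true) else 0)
          = (if s ≤ c then
              cpr p (fun ω => C ω = c) (fun ω => Z ω = z ∧ X ω = x ∧ R ω = true) else 0)
            * pr p (fun ω => T0 ω = s ∧ Z ω = z ∧ X ω = x ∧ R ω = true) := by
        intro c _
        by_cases hsc : s ≤ c
        · rw [if_pos hsc, if_pos hsc, hCc c]
        · rw [if_neg hsc, if_neg hsc, zero_mul]
      rw [e1, Finset.sum_congr rfl step, ← Finset.sum_mul]
      congr 1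
      rw [hG z x s]
      simp only [cpr]
      rw [e2, Finset.sum_div]
      refine Finset.sum_congr rfl fun c _ => ?_
      by_cases hsc : s ≤ c
      · rw [if_pos hsc, if_pos hsc]
      · rw [if_neg hsc, if_neg hsc, zero_div]
    by_cases hT : pr p (fun ω => T0 ω = s ∧ Z ω = z ∧ X ω = x ∧ R ω = true) = 0
    · rw [hcens, hT, mul_zero, mul_zero, mul_zero]
    · have hTpos : 0 < pr p (fun ω => T0 ω = s ∧ Z ω = z ∧ X ω = x ∧ R ω = true) :=
        lt_of_le_of_ne (pr_nonneg hp _) (Ne.symm hT)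
      have hcpr : cpr p (fun ω => T0 ω = s) (fun ω => Z ω = z ∧ X ω = x ∧ R ω = true)
          = pr p (fun ω => T0 ω = s ∧ Z ω = z ∧ X ω = x ∧ R ω = true)
            / pr p (fun ω => Z ω = z ∧ X ω = x ∧ R ω = true) := by
        rw [cpr]
      have hGp := hGpos z x hBpos s hs (by rw [hcpr]; exact div_pos hTpos hBpos)
      have hGne : G z x s ≠ 0 := ne_of_gt hGp
      rw [hcens]
      field_simp
      try ring

end main

/-- Treatment-bridge proximal identification of the counterfactual event probability
with right censoring (discrete version of Theorem 1, equation (4)). -/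
theorem treatment_bridge_identification
    {𝒳 𝒰 𝒵 𝒲 : Type*} [Fintype 𝒳] [Fintype 𝒰] [Fintype 𝒵] [Fintype 𝒲]
    (p : Ω → ℝ) (hp : ∀ ω, 0 ≤ p ω) (hp1 : ∑ ω, p ω = 1)
    (R : Ω → Bool) (X : Ω → 𝒳) (U : Ω → 𝒰) (Z : Ω → 𝒵) (W : Ω → 𝒲)
    (T0 C : Ω → ℕ) (t : ℕ) (q : 𝒵 → 𝒳 → ℝ)
    (G : 𝒵 → 𝒳 → ℕ → ℝ)
    (hG : ∀ (z : 𝒵) (x : 𝒳) (s : ℕ),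
      G z x s = cpr p (fun ω => s ≤ C ω) (fun ω => Z ω = z ∧ X ω = x ∧ R ω = true))
    -- (i) negative control assumption: (T₀, W) ⫫ (Z, R) | (U, X)
    (hNC : ∀ (s : ℕ) (w : 𝒲) (z : 𝒵) (r : Bool) (u : 𝒰) (x : 𝒳),
      0 < pr p (fun ω => U ω = u ∧ X ω = x) →
      cpr p (fun ω => (T0 ω = s ∧ W ω = w) ∧ (Z ω = z ∧ R ω = r))
          (fun ω => U ω = u ∧ X ω = x)
        = cpr p (fun ω => T0 ω = s ∧ W ω = w) (fun ω => U ω = u ∧ X ω = x)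
          * cpr p (fun ω => Z ω = z ∧ R ω = r) (fun ω => U ω = u ∧ X ω = x))
    -- (ii) censoring at random in the external study
    (hCAR : ∀ (z : 𝒵) (x : 𝒳), 0 < pr p (fun ω => Z ω = z ∧ X ω = x ∧ R ω = true) →
      ∀ (c s : ℕ) (u : 𝒰) (w : 𝒲),
        cpr p (fun ω => C ω = c ∧ (T0 ω = s ∧ U ω = u ∧ W ω = w))
            (fun ω => Z ω = z ∧ X ω = x ∧ R ω = true)
          = cpr p (fun ω => C ω = c) (fun ω => Z ω = z ∧ X ω = x ∧ R ω = true)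
            * cpr p (fun ω => T0 ω = s ∧ U ω = u ∧ W ω = w)
                (fun ω => Z ω = z ∧ X ω = x ∧ R ω = true))
    (hGpos : ∀ (z : 𝒵) (x : 𝒳), 0 < pr p (fun ω => Z ω = z ∧ X ω = x ∧ R ω = true) →
      ∀ s ≤ t, 0 < cpr p (fun ω => T0 ω = s) (fun ω => Z ω = z ∧ X ω = x ∧ R ω = true) →
        0 < G z x s)
    -- (iii) positivity
    (hPosU : ∀ (u : 𝒰) (x : 𝒳),
      0 < pr p (fun ω => U ω = u ∧ X ω = x) →
      0 < pr p (fun ω => U ω = u ∧ X ω = x ∧ R ω = true))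
    (hPosW : ∀ (w : 𝒲) (x : 𝒳),
      0 < pr p (fun ω => W ω = w ∧ X ω = x) →
      0 < pr p (fun ω => W ω = w ∧ X ω = x ∧ R ω = true))
    -- (iv) completeness
    (hComp : ∀ (x : 𝒳) (g : 𝒰 → ℝ),
      (∀ w : 𝒲, 0 < pr p (fun ω => W ω = w ∧ X ω = x ∧ R ω = true) →
        cex p (fun ω => g (U ω)) (fun ω => W ω = w ∧ X ω = x ∧ R ω = true) = 0) →
      ∀ u : 𝒰, 0 < pr p (fun ω => U ω = u ∧ X ω = x ∧ R ω = true) → g u = 0)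
    -- (v) observed treatment bridge equation
    (hBridge : ∀ (w : 𝒲) (x : 𝒳), 0 < pr p (fun ω => W ω = w ∧ X ω = x ∧ R ω = true) →
      cpr p (fun ω => R ω = false) (fun ω => W ω = w ∧ X ω = x)
          / cpr p (fun ω => R ω = true) (fun ω => W ω = w ∧ X ω = x)
        = cex p (fun ω => q (Z ω) (X ω)) (fun ω => W ω = w ∧ X ω = x ∧ R ω = true))
    (hR0 : 0 < pr p (fun ω => R ω = false)) :
    cpr p (fun ω => T0 ω ≤ t) (fun ω => R ω = false)
      = (1 / pr p (fun ω => R ω = false))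
        * ex p (fun ω => (if R ω = true then (1 : ℝ) else 0) * q (Z ω) (X ω)
            * (if T0 ω ≤ C ω then (1 : ℝ) else 0) * (if T0 ω ≤ t then (1 : ℝ) else 0)
            / G (Z ω) (X ω) (T0 ω)) := by
  have hb1 : ∀ ω, (R ω = true ∧ T0 ω ≤ C ω ∧ T0 ω ≤ t) → T0 ω < t + 1 :=
    fun ω hω => Nat.lt_succ_of_le hω.2.2
  have hA0 : ex p (fun ω => (if R ω = true then (1 : ℝ) else 0) * q (Z ω) (X ω)
        * (if T0 ω ≤ C ω then (1 : ℝ) else 0) * (if T0 ω ≤ t then (1 : ℝ) else 0)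
        / G (Z ω) (X ω) (T0 ω))
      = exM p (fun ω => R ω = true ∧ T0 ω ≤ C ω ∧ T0 ω ≤ t)
          (fun ω => q (Z ω) (X ω) / G (Z ω) (X ω) (T0 ω)) := by
    rw [ex]
    unfold exM
    refine Finset.sum_congr rfl fun ω _ => ?_
    by_cases h1 : R ω = true <;> by_cases h2 : T0 ω ≤ C ω <;> by_cases h3 : T0 ω ≤ t <;>
      simp [h1, h2, h3] <;> ring
  have hEntire : ex p (fun ω => (if R ω = true then (1 : ℝ) else 0) * q (Z ω) (X ω)
        * (if T0 ω ≤ C ω then (1 : ℝ) else 0) * (if T0 ω ≤ t then (1 : ℝ) else 0)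
        / G (Z ω) (X ω) (T0 ω))
      = pr p (fun ω => T0 ω ≤ t ∧ R ω = false) := by
    rw [hA0, exM_fiber Z,
      Finset.sum_congr rfl fun z (_ : z ∈ Finset.univ) => exM_fiber X _ _,
      Finset.sum_congr rfl fun z (_ : z ∈ Finset.univ) =>
        Finset.sum_congr rfl fun x (_ : x ∈ Finset.univ) =>
          exM_fiber_nat T0 (t+1) _ _ (fun ω hω => hb1 ω hω.2.2)]
    have hinner : ∀ (z : 𝒵) (x : 𝒳), ∀ s ∈ Finset.range (t+1),
        exM p (fun ω => T0 ω = s ∧ (fun ω => X ω = x ∧ (fun ω => Z ω = z ∧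
            (R ω = true ∧ T0 ω ≤ C ω ∧ T0 ω ≤ t)) ω) ω)
          (fun ω => q (Z ω) (X ω) / G (Z ω) (X ω) (T0 ω))
        = q z x * pr p (fun ω => T0 ω = s ∧ Z ω = z ∧ X ω = x ∧ R ω = true) := by
      intro z x s hsmem
      have hs : s ≤ t := Nat.lt_succ_iff.mp (Finset.mem_range.mp hsmem)
      have e1 : exM p (fun ω => T0 ω = s ∧ (fun ω => X ω = x ∧ (fun ω => Z ω = z ∧
            (R ω = true ∧ T0 ω ≤ C ω ∧ T0 ω ≤ t)) ω) ω)
          (fun ω => q (Z ω) (X ω) / G (Z ω) (X ω) (T0 ω))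
          = (q z x / G z x s) * pr p (fun ω => T0 ω = s ∧ (fun ω => X ω = x ∧ (fun ω => Z ω = z ∧
            (R ω = true ∧ T0 ω ≤ C ω ∧ T0 ω ≤ t)) ω) ω) :=
        exM_const fun ω hω => by
          simp only at hω
          rw [hω.1, hω.2.1, hω.2.2.1]
      rw [e1]
      have e2 : pr p (fun ω => T0 ω = s ∧ (fun ω => X ω = x ∧ (fun ω => Z ω = z ∧
            (R ω = true ∧ T0 ω ≤ C ω ∧ T0 ω ≤ t)) ω) ω)
          = pr p (fun ω => T0 ω = s ∧ s ≤ C ω ∧ Z ω = z ∧ X ω = x ∧ R ω = true) := by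
        refine pr_congr fun ω => ?_
        simp only
        constructor
        · rintro ⟨h1, h2, h3, h4, h5, h6⟩
          exact ⟨h1, h1 ▸ h5, h3, h2, h4⟩
        · rintro ⟨h1, h2, h3, h4, h5⟩
          exact ⟨h1, h4, h3, h5, h1 ▸ h2, h1 ▸ hs⟩
      rw [e2]
      exact Censor hp R X U Z W T0 hNC C G t hG hCAR hGpos (q z x) z x s hs
    rw [Finset.sum_congr rfl fun z (_ : z ∈ Finset.univ) =>
        Finset.sum_congr rfl fun x (_ : x ∈ Finset.univ) =>
          Finset.sum_congr rfl (hinner z x)]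
    rw [Finset.sum_comm]
    rw [Finset.sum_congr rfl fun x (_ : x ∈ Finset.univ) => Finset.sum_comm]
    rw [Finset.sum_congr rfl fun x (_ : x ∈ Finset.univ) =>
        Finset.sum_congr rfl fun s (_ : s ∈ Finset.range (t+1)) =>
          CC hp R X U Z W T0 hNC q hPosU hComp hBridge s x]
    refine Eq.symm ((pr_fiber X _).trans ?_)
    rw [Finset.sum_congr rfl fun x (_ : x ∈ Finset.univ) =>
        pr_fiber_nat T0 (t+1) _ (fun ω hω => Nat.lt_succ_of_le hω.2.1)]
    refine Finset.sum_congr rfl fun x _ => Finset.sum_congr rfl fun s hsmem => ?_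
    have hs : s ≤ t := Nat.lt_succ_iff.mp (Finset.mem_range.mp hsmem)
    refine pr_congr fun ω => ?_
    constructor
    · rintro ⟨h1, h2, h3, h4⟩
      exact ⟨h1, h2, h4⟩
    · rintro ⟨h1, h2, h3⟩
      exact ⟨h1, h2, h1 ▸ hs, h3⟩
  rw [cpr, hEntire.symm, one_div, inv_mul_eq_div]
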